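/- arXiv:0709.0897 — 2 statements merged into one kernel-verified Lean document; each statement's English description precedes it below -/
import Mathlib

section
/- Let λ be a partition with r rows and c columns, t = r + c, A its set of first-column hook lengths, A′ the complement of A in {0,…,t−1}, and let λ̃ denote the remnant of λ, i.e., the partition (c − λ_r, c − λ_{r−1}, …, c − λ_1) with zero parts removed. Then the multiset of hook lengths of λ̃ equals {a′ − a : a′ ∈ A′, a ∈ A, a′ > a}. -/
/-- A partition: a weakly decreasing list of positive integers. -/
def IsPartition (l : List ℕ) : Prop :=
  l.Pairwise (· ≥ ·) ∧ ∀ x ∈ l, 0 < x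

/-- Hook length of the box in row `i`, column `j` (0-indexed):
arm (number of boxes strictly to the right) + leg (boxes strictly below) + 1. -/
def hook (l : List ℕ) (i j : ℕ) : ℕ :=
  (l.getD i 0 - j) + ((Finset.range l.length).filter (fun k => i < k ∧ j < l.getD k 0)).card

/-- The multiset of all hook lengths of a partition. -/
def hookMultiset (l : List ℕ) : Multiset ℕ :=
  ↑((List.range l.length).flatMap fun i => (List.range (l.getD i 0)).map fun j => hook l i j)

/-- The set of first-column hook lengths. -/
def firstColHooks (l : List ℕ) : Finset ℕ :=
  (Finset.range l.length).image fun i => hook l i 0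

/-- The multiset `{s - t : s ∈ S, t ∈ T, s > t}`. -/
def posDiffs (S T : Finset ℕ) : Multiset ℕ :=
  ((S ×ˢ T).filter fun q => q.2 < q.1).val.map fun q => q.1 - q.2

/-- The remnant of a partition: the complement in the `r × c` rectangle, rotated 180°. -/
def remnant (l : List ℕ) : List ℕ :=
  ((l.reverse).map fun x => l.headD 0 - x).filter fun x => decide (0 < x)

/-- The front section of the first `p` rows: delete all full-height columns but the rightmost. -/
def frontSection (l : List ℕ) (p : ℕ) : List ℕ :=
  (l.take p).map fun v => v + 1 - l.getD (p - 1) 0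

/-- The extension `λ_p - λ_{p+1}` of a partition with respect to period `p`. -/
def extension (l : List ℕ) (p : ℕ) : ℕ :=
  l.getD (p - 1) 0 - l.getD p 0

/-- The multiset of differences `{c_i - c_j : i < j}` of a (decreasing) list. -/
def listDiffs (ch : List ℕ) : Multiset ℕ :=
  ↑((List.range ch.length).flatMap fun i =>
    ((List.range ch.length).filter fun j => decide (i < j)).map fun j => ch.getD i 0 - ch.getD j 0)

/-- The characteristic of a front section: its first-column hook lengths. -/
def charList (fs : List ℕ) : List ℕ :=
  (List.range fs.length).map fun i => hook fs i 0

/-- The multiset of missing hook numbers of the ∞-partition formed from the top `p` rows. -/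
def missingHooks (l : List ℕ) (p : ℕ) : Multiset ℕ :=
  listDiffs (charList (frontSection l p))

/-- Reconstruct a partition from a `p`-partition datum: front section `fs` atop
remainder `rem`, with extension `x`. -/
def assemble (fs rem : List ℕ) (x : ℕ) : List ℕ :=
  (fs.map fun v => v + (rem.headD 0 + x) - 1) ++ rem

/-- Increment the first `p` parts of `l` by `n`. -/
def bump (l : List ℕ) (p n : ℕ) : List ℕ :=
  ((l.take p).map fun v => v + n) ++ l.drop p

/-- The difference multiset `{a i - a j : 1 ≤ i < j ≤ p}` of a (1-indexed) sequence. -/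
def seqDiffs (a : ℕ → ℕ) (p : ℕ) : Multiset ℕ :=
  ((Finset.Icc 1 p ×ˢ Finset.Icc 1 p).filter fun q => q.1 < q.2).val.map fun q => a q.1 - a q.2

/-- Multiplicity of `m` among the hook lengths of the ∞-partition with front section `f`:
the number of rows `i` containing a box (possibly at a negative column `j`) of hook length `m`. -/
noncomputable def infMult (f : List ℕ) (m : ℕ) : ℕ :=
  Set.ncard {i : ℕ | i < f.length ∧ ∃ j : ℤ, j < (f.getD i 0 : ℤ) ∧
    ((f.getD i 0 : ℤ) - j) +
      (((Finset.range f.length).filter fun k => i < k ∧ j < (f.getD k 0 : ℤ)).card : ℤ) = (m : ℤ)}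

/-- The characteristic set of the enveloping ∞-partition `E∞(λ)`:
`{a + t + 1 : a ∈ A} ∪ {a' + 1 : a' ∈ A'}`. -/
def envChar (l : List ℕ) : Finset ℕ :=
  ((firstColHooks l).image fun a => a + (l.length + l.headD 0) + 1) ∪
  (((Finset.range (l.length + l.headD 0)) \ firstColHooks l).image fun a => a + 1)

/-- The missing-hook-number multiset of `E∞(λ)`: all positive pairwise differences
of the characteristic set. -/
def envMissing (l : List ℕ) : Multiset ℕ := posDiffs (envChar l) (envChar l)

/-- Number of parts of `l` exceeding `j`: the `(j+1)`-st part of the conjugate. -/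
def conjPart (l : List ℕ) (j : ℕ) : ℕ :=
  ((Finset.range l.length).filter fun k => j < l.getD k 0).card

/-- The enveloping partition `E(λ)`: a `t × t` square with the rotated reflection of `λ`
removed from the bottom-right, and copies of `λ` adjoined top-right and bottom-left. -/
def envelope (l : List ℕ) : List ℕ :=
  (l.map fun v => v + (l.length + l.headD 0)) ++
  ((List.range (l.headD 0)).map fun i =>
    (l.length + l.headD 0) - conjPart l (l.headD 0 - 1 - i)) ++ l

/-- Iteratively stack `d` copies of the front section `fs` atop `rem`, with extensions `x i`. -/
def stack (fs rem : List ℕ) (x : ℕ → ℕ) : ℕ → List ℕ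
  | 0 => rem
  | (i + 1) => assemble fs (stack fs rem x i) (x (i + 1))


/-!
Row `i` of a partition `μ`, whose first box has hook `a_i`, has as hook lengths exactly the
numbers `a_i - b` with `b < a_i` not a first-column hook of `μ`; hence
`H(μ) = {a - b : a ∈ A_μ, b ∈ A'_μ, b < a}`. Apply this to `μ = λ̃`. With `s = c + r̃`, where `r̃`
is the number of rows of `λ̃`, the reflection `x ↦ s - 1 - x` maps the first-column hooks of `λ`
below `s` onto those of `λ̃`, and `A'`, which lies below `s`, onto the complement of `A_λ̃` (up to
numbers too large to occur in a pair). The reflection reverses the order of each pair, so the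
pairs `b < a` for `λ̃` are the pairs `a < a'` for `λ`, with the same differences.
-/
open Finset

namespace List.Pairwise

variable {l : List ℕ}

lemma getD_le_getD (hsort : l.Pairwise (· ≥ ·)) {i j : ℕ} (hij : i ≤ j) :
    l.getD j 0 ≤ l.getD i 0 := by
  rcases lt_or_ge j l.length with hj | hj
  · rw [getD_eq_getElem l 0 hj, getD_eq_getElem l 0 (hij.trans_lt hj)]
    exact hsort.rel_get_of_le (a := ⟨i, hij.trans_lt hj⟩) (b := ⟨j, hj⟩) hij
  · rw [getD_eq_default l 0 hj]
    exact Nat.zero_le _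

lemma getD_le_headD (hsort : l.Pairwise (· ≥ ·)) (i : ℕ) : l.getD i 0 ≤ l.headD 0 := by
  cases l with
  | nil => simp
  | cons a l => simpa using hsort.getD_le_getD (Nat.zero_le i)

end List.Pairwise

lemma List.Pairwise.filter_pos_eq_take {m : List ℕ} (hm : m.Pairwise (· ≥ ·)) :
    m.filter (0 < ·) = m.take (m.countP (0 < ·)) := by
  induction m with
  | nil => rfl
  | cons a m ih =>
    rcases Nat.eq_zero_or_pos a with rfl | ha
    · have hzero : ∀ x ∈ m, ¬ 0 < x := fun x hx =>
        Nat.not_lt.2 (List.rel_of_pairwise_cons hm hx)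
      have hfilter : m.filter (0 < ·) = [] :=
        List.filter_eq_nil_iff.2 fun x hx => by simpa using hzero x hx
      have hcount : m.countP (0 < ·) = 0 :=
        List.countP_eq_zero.2 fun x hx => by simpa using hzero x hx
      simp [hfilter, hcount]
    · simp [ha, ih hm.of_cons]

lemma List.countP_eq_card_filter_range (p : ℕ → Prop) [DecidablePred p] (l : List ℕ) :
    l.countP (p ·) = #{k ∈ Finset.range l.length | p (l.getD k 0)} := by
  have hl : (List.range l.length).map (l.getD · 0) = l :=
    List.ext_getElem (by simp) fun k _ hk => by simp [hk]
  conv_lhs => rw [← hl]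
  rw [List.countP_map, card_def, filter_val, range_val, ← Multiset.coe_range,
    Multiset.filter_coe, Multiset.coe_card, List.countP_eq_length_filter]
  rfl

section Hooks

variable {l : List ℕ}

lemma card_filter_lt_range (r i : ℕ) : #{k ∈ range r | i < k} = r - 1 - i := by
  rw [show {k ∈ range r | i < k} = Ioo i r by ext k; simp [and_comm], Nat.card_Ioo]
  omega

lemma hook_zero (hpos : ∀ x ∈ l, 0 < x) (i : ℕ) :
    hook l i 0 = l.getD i 0 + (l.length - 1 - i) := by
  have hrows : {k ∈ range l.length | i < k ∧ 0 < l.getD k 0} = {k ∈ range l.length | i < k} :=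
    filter_congr fun k hk => by
      rw [List.getD_eq_getElem l 0 (mem_range.1 hk)]
      simpa using fun _ => hpos _ (List.getElem_mem _)
  rw [hook, hrows, card_filter_lt_range, Nat.sub_zero]

lemma hook_zero_strictAntiOn (hsort : l.Pairwise (· ≥ ·)) (hpos : ∀ x ∈ l, 0 < x) :
    StrictAntiOn (fun i => hook l i 0) (Set.Iio l.length) := by
  intro i hi j hj hij
  simp only [Set.mem_Iio] at hi hj
  simp only [hook_zero hpos i, hook_zero hpos j]
  have := hsort.getD_le_getD hij.le
  omega

lemma hook_zero_lt (hsort : l.Pairwise (· ≥ ·)) (hpos : ∀ x ∈ l, 0 < x) {i : ℕ}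
    (hi : i < l.length) : hook l i 0 < l.length + l.headD 0 := by
  rw [hook_zero hpos i]
  have := hsort.getD_le_headD i
  omega

lemma hook_strictAntiOn_right (i : ℕ) : StrictAntiOn (hook l i) (Set.Iio (l.getD i 0)) := by
  intro j _ j' hj' hjj'
  have : #{k ∈ range l.length | i < k ∧ j' < l.getD k 0}
      ≤ #{k ∈ range l.length | i < k ∧ j < l.getD k 0} :=
    card_le_card <| monotone_filter_right _ fun k _ ⟨hik, hk⟩ => ⟨hik, hjj'.trans hk⟩
  simp only [Set.mem_Iio] at hj'
  unfold hook
  omega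

lemma mem_firstColHooks {x : ℕ} : x ∈ firstColHooks l ↔ ∃ i < l.length, hook l i 0 = x := by
  simp [firstColHooks]

lemma firstColHooks_val (hsort : l.Pairwise (· ≥ ·)) (hpos : ∀ x ∈ l, 0 < x) :
    (firstColHooks l).val = (range l.length).val.map fun i => hook l i 0 :=
  image_val_of_injOn <| by
    rw [coe_range]
    exact (hook_zero_strictAntiOn hsort hpos).injOn

lemma firstColHooks_filter_lt_hook_zero (hsort : l.Pairwise (· ≥ ·)) (hpos : ∀ x ∈ l, 0 < x)
    {i : ℕ} (hi : i < l.length) :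
    {a ∈ firstColHooks l | a < hook l i 0} = (Ioo i l.length).image fun k => hook l k 0 := by
  have hanti := hook_zero_strictAntiOn hsort hpos
  ext x
  simp only [mem_filter, mem_firstColHooks, mem_image, mem_Ioo]
  constructor
  · rintro ⟨⟨k, hk, rfl⟩, hlt⟩
    exact ⟨k, ⟨(hanti.lt_iff_gt hk hi).1 hlt, hk⟩, rfl⟩
  · rintro ⟨k, ⟨hik, hk⟩, rfl⟩
    exact ⟨⟨k, hk, rfl⟩, hanti hi hk hik⟩

end Hooks

section RowFormula

variable {l : List ℕ}

lemma hook_zero_sub_hook (hpos : ∀ x ∈ l, 0 < x) {i j : ℕ} (hj : j < l.getD i 0) :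
    hook l i 0 - hook l i j = j + #{k ∈ range l.length | i < k ∧ l.getD k 0 ≤ j} := by
  have hsplit := card_filter_add_card_filter_not
    (s := {k ∈ range l.length | i < k}) (fun k => j < l.getD k 0)
  simp only [filter_filter, not_lt, card_filter_lt_range] at hsplit
  rw [hook_zero hpos i, hook]
  omega

lemma hook_zero_sub_hook_notMem_firstColHooks (hsort : l.Pairwise (· ≥ ·))
    (hpos : ∀ x ∈ l, 0 < x) {i j : ℕ} (hj : j < l.getD i 0) :
    hook l i 0 - hook l i j ∉ firstColHooks l := by
  rw [hook_zero_sub_hook hpos hj, mem_firstColHooks]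
  rintro ⟨k, hk, hjk⟩
  rw [hook_zero hpos k] at hjk
  set M := #{m ∈ range l.length | i < m ∧ l.getD m 0 ≤ j}
  rcases le_or_gt (l.getD k 0) j with hkj | hkj
  · have hik : i < k := by
      by_contra! hki
      have := hsort.getD_le_getD hki
      omega
    have : #(Ico k l.length) ≤ M := card_le_card fun m hm => by
      rw [mem_Ico] at hm
      simp only [mem_filter, mem_range]
      exact ⟨hm.2, by omega, (hsort.getD_le_getD hm.1).trans hkj⟩
    rw [Nat.card_Ico] at this
    omega
  · have : M ≤ #(Ioo k l.length) := card_le_card fun m hm => by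
      simp only [mem_filter, mem_range] at hm
      refine mem_Ioo.2 ⟨?_, hm.1⟩
      by_contra! hmk
      have := hsort.getD_le_getD hmk
      omega
    rw [Nat.card_Ioo] at this
    omega

lemma card_compl_firstColHooks_filter_lt (hsort : l.Pairwise (· ≥ ·)) (hpos : ∀ x ∈ l, 0 < x)
    {i : ℕ} (hi : i < l.length) :
    #{b ∈ range (l.length + l.headD 0) \ firstColHooks l | b < hook l i 0} = l.getD i 0 := by
  have hlt := hook_zero_lt hsort hpos hi
  have hcompl : {b ∈ range (l.length + l.headD 0) \ firstColHooks l | b < hook l i 0}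
      = range (hook l i 0) \ {a ∈ firstColHooks l | a < hook l i 0} := by
    ext b
    simp only [mem_filter, mem_sdiff, mem_range]
    constructor
    · rintro ⟨⟨hbt, hbA⟩, hb⟩
      exact ⟨hb, fun h => hbA h.1⟩
    · rintro ⟨hb, hbA⟩
      exact ⟨⟨by omega, fun h => hbA ⟨h, hb⟩⟩, hb⟩
  have hcard : #{a ∈ firstColHooks l | a < hook l i 0} = l.length - 1 - i := by
    rw [firstColHooks_filter_lt_hook_zero hsort hpos hi, card_image_of_injOn, Nat.card_Ioo]
    · omega
    · exact (hook_zero_strictAntiOn hsort hpos).injOn.mono fun k hk => (mem_Ioo.1 hk).2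
  rw [hcompl, card_sdiff_of_subset (fun a ha => mem_range.2 (mem_filter.1 ha).2), card_range,
    hcard, hook_zero hpos i]
  omega

lemma hooks_row_eq (hsort : l.Pairwise (· ≥ ·)) (hpos : ∀ x ∈ l, 0 < x) {i : ℕ}
    (hi : i < l.length) :
    (((List.range (l.getD i 0)).map fun j => hook l i j : List ℕ) : Multiset ℕ)
      = {b ∈ range (l.length + l.headD 0) \ firstColHooks l | b < hook l i 0}.val.map
          (hook l i 0 - ·) := by
  set B := {b ∈ range (l.length + l.headD 0) \ firstColHooks l | b < hook l i 0}
  have hrow_nodup : ((List.range (l.getD i 0)).map (hook l i)).Nodup :=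
    List.nodup_range.map_on fun j hj j' hj' => (hook_strictAntiOn_right i).injOn
      (List.mem_range.1 hj) (List.mem_range.1 hj')
  have hsub : ∀ j < l.getD i 0, hook l i j ∈ B.val.map (hook l i 0 - ·) := by
    intro j hj
    have hle := (hook_strictAntiOn_right (l := l) i).antitoneOn (Set.mem_Iio.2 (by omega))
      (Set.mem_Iio.2 hj) (Nat.zero_le j)
    have hhook_pos : 0 < hook l i j := by unfold hook; omega
    refine Multiset.mem_map.2 ⟨hook l i 0 - hook l i j, ?_, by omega⟩
    simp only [B, mem_val, mem_filter, mem_sdiff, mem_range]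
    exact ⟨⟨by have := hook_zero_lt hsort hpos hi; omega,
      hook_zero_sub_hook_notMem_firstColHooks hsort hpos hj⟩, by omega⟩
  refine Multiset.eq_of_le_of_card_le
    ((Multiset.le_iff_subset (Multiset.coe_nodup.2 hrow_nodup)).2 fun m hm => ?_) ?_
  · obtain ⟨j, hj, rfl⟩ := List.mem_map.1 (Multiset.mem_coe.1 hm)
    exact hsub j (List.mem_range.1 hj)
  · rw [Multiset.card_map, card_val, card_compl_firstColHooks_filter_lt hsort hpos hi,
      Multiset.coe_card, List.length_map, List.length_range]

lemma posDiffs_eq_bind (S T : Finset ℕ) :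
    posDiffs S T = S.val.bind fun a => {b ∈ T | b < a}.val.map (a - ·) := by
  rw [posDiffs, filter_val, product_val,
    show S.val ×ˢ T.val = S.val.bind fun a => T.val.map (a, ·) from rfl, Multiset.filter_bind,
    Multiset.map_bind]
  refine Multiset.bind_congr fun a _ => ?_
  rw [Multiset.filter_map, Multiset.map_map, filter_val]
  rfl

theorem hookMultiset_eq_posDiffs (hsort : l.Pairwise (· ≥ ·)) (hpos : ∀ x ∈ l, 0 < x) :
    hookMultiset l
      = posDiffs (firstColHooks l) (range (l.length + l.headD 0) \ firstColHooks l) := by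
  rw [posDiffs_eq_bind, firstColHooks_val hsort hpos, Multiset.bind_map, hookMultiset,
    ← Multiset.coe_bind]
  exact Multiset.bind_congr fun i hi => hooks_row_eq hsort hpos (Multiset.mem_range.1 hi)

end RowFormula
section Remnant

variable {l : List ℕ}

lemma pairwise_reverse_map_headD_sub (hsort : l.Pairwise (· ≥ ·)) :
    (l.reverse.map (l.headD 0 - ·)).Pairwise (· ≥ ·) :=
  List.pairwise_map.2 <| List.pairwise_reverse.2 <| hsort.imp fun h => Nat.sub_le_sub_left h _

lemma remnant_pairwise (hsort : l.Pairwise (· ≥ ·)) : (remnant l).Pairwise (· ≥ ·) :=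
  (pairwise_reverse_map_headD_sub hsort).filter _

lemma remnant_pos : ∀ x ∈ remnant l, 0 < x := by
  simp [remnant]

lemma remnant_length :
    (remnant l).length = #{k ∈ range l.length | l.getD k 0 < l.headD 0} := by
  rw [← List.countP_eq_card_filter_range (· < l.headD 0), remnant, ← List.countP_eq_length_filter,
    List.countP_map, List.countP_reverse]
  simp [Function.comp_def]

lemma remnant_length_le : (remnant l).length ≤ l.length := by
  simpa [remnant] using List.length_filter_le _ (l.reverse.map (l.headD 0 - ·))

lemma remnant_getD (hsort : l.Pairwise (· ≥ ·)) {i : ℕ} (hi : i < (remnant l).length) :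
    (remnant l).getD i 0 = l.headD 0 - l.getD (l.length - 1 - i) 0 := by
  have hil : i < l.length := hi.trans_le remnant_length_le
  rw [remnant, (pairwise_reverse_map_headD_sub hsort).filter_pos_eq_take] at hi ⊢
  simp only [List.length_take, lt_min_iff, List.countP_map, List.countP_reverse,
    List.headD_eq_head?_getD] at hi
  have hk : l.length - 1 - i < l.length := by omega
  simp [List.getD_eq_getElem?_getD, hil, hi.1, List.getElem?_eq_getElem hk]

lemma remnant_headD_le : (remnant l).headD 0 ≤ l.headD 0 := by
  rcases h : remnant l with _ | ⟨a, m⟩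
  · exact Nat.zero_le _
  · obtain ⟨x, -, rfl⟩ : ∃ x ∈ l.reverse, l.headD 0 - x = a := by
      simpa [remnant] using (List.mem_filter.1 (h ▸ List.mem_cons_self : a ∈ remnant l)).1
    exact Nat.sub_le _ _

lemma remnant_length_le_of_headD_le (hsort : l.Pairwise (· ≥ ·)) {k : ℕ}
    (hfull : l.headD 0 ≤ l.getD k 0) : (remnant l).length ≤ l.length - 1 - k := by
  have : #{m ∈ range l.length | l.getD m 0 < l.headD 0} ≤ #(Ioo k l.length) :=
    card_le_card fun m hm => by
      simp only [mem_filter, mem_range] at hm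
      refine mem_Ioo.2 ⟨?_, hm.1⟩
      by_contra! hmk
      have := hsort.getD_le_getD hmk
      omega
  rw [remnant_length]
  rw [Nat.card_Ioo] at this
  omega

lemma le_remnant_length_of_lt_headD (hsort : l.Pairwise (· ≥ ·)) {k : ℕ}
    (hsmall : l.getD k 0 < l.headD 0) : l.length - k ≤ (remnant l).length := by
  rw [remnant_length, ← Nat.card_Ico]
  exact card_le_card fun m hm => by
    rw [mem_Ico] at hm
    exact mem_filter.2 ⟨mem_range.2 hm.2, (hsort.getD_le_getD hm.1).trans_lt hsmall⟩

lemma lt_of_notMem_firstColHooks (hsort : l.Pairwise (· ≥ ·)) (hpos : ∀ x ∈ l, 0 < x) {x : ℕ}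
    (hxt : x < l.length + l.headD 0) (hx : x ∉ firstColHooks l) :
    x < l.headD 0 + (remnant l).length := by
  by_contra! hsx
  set k := l.length + l.headD 0 - 1 - x
  have hfull : l.headD 0 ≤ l.getD k 0 := by
    by_contra! hsmall
    have := le_remnant_length_of_lt_headD hsort hsmall
    omega
  have := remnant_length_le (l := l)
  have := hsort.getD_le_headD k
  exact hx <| mem_firstColHooks.2 ⟨k, by omega, by rw [hook_zero hpos]; omega⟩

lemma mem_firstColHooks_remnant (hsort : l.Pairwise (· ≥ ·)) (hpos : ∀ x ∈ l, 0 < x) {x : ℕ} :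
    x ∈ firstColHooks (remnant l) ↔ x < l.headD 0 + (remnant l).length ∧
      l.headD 0 + (remnant l).length - 1 - x ∈ firstColHooks l := by
  have hrr := remnant_length_le (l := l)
  rw [mem_firstColHooks, mem_firstColHooks]
  constructor
  · rintro ⟨i, hi, rfl⟩
    have hsmall : l.getD (l.length - 1 - i) 0 < l.headD 0 := by
      by_contra! hfull
      have := remnant_length_le_of_headD_le hsort hfull
      omega
    rw [hook_zero remnant_pos, remnant_getD hsort hi]
    refine ⟨by omega, l.length - 1 - i, by omega, ?_⟩
    rw [hook_zero hpos]
    omega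
  · rintro ⟨hxs, k, hk, hkx⟩
    rw [hook_zero hpos] at hkx
    have hsmall : l.getD k 0 < l.headD 0 := by
      by_contra! hfull
      have := remnant_length_le_of_headD_le hsort hfull
      omega
    have := le_remnant_length_of_lt_headD hsort hsmall
    refine ⟨l.length - 1 - k, by omega, ?_⟩
    rw [hook_zero remnant_pos, remnant_getD hsort (by omega),
      show l.length - 1 - (l.length - 1 - k) = k by omega]
    omega

lemma firstColHooks_remnant_eq_image (hsort : l.Pairwise (· ≥ ·)) (hpos : ∀ x ∈ l, 0 < x) :
    firstColHooks (remnant l) = {a ∈ firstColHooks l | a < l.headD 0 + (remnant l).length}.image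
      (l.headD 0 + (remnant l).length - 1 - ·) := by
  set s := l.headD 0 + (remnant l).length
  ext x
  rw [mem_firstColHooks_remnant hsort hpos, mem_image]
  constructor
  · rintro ⟨hxs, hx⟩
    exact ⟨_, mem_filter.2 ⟨hx, by omega⟩, by omega⟩
  · rintro ⟨a, ha, rfl⟩
    rw [mem_filter] at ha
    exact ⟨by omega, by rw [show s - 1 - (s - 1 - a) = a by omega]; exact ha.1⟩

lemma range_sdiff_firstColHooks_remnant (hsort : l.Pairwise (· ≥ ·)) (hpos : ∀ x ∈ l, 0 < x) :
    range ((remnant l).length + (remnant l).headD 0) \ firstColHooks (remnant l)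
      = {y ∈ (range (l.length + l.headD 0) \ firstColHooks l).image
          (l.headD 0 + (remnant l).length - 1 - ·) |
        y < (remnant l).length + (remnant l).headD 0} := by
  set s := l.headD 0 + (remnant l).length
  have := remnant_length_le (l := l)
  have := remnant_headD_le (l := l)
  ext y
  simp only [mem_sdiff, mem_range, mem_filter, mem_image, mem_firstColHooks_remnant hsort hpos,
    not_and]
  constructor
  · rintro ⟨hy, hyB⟩
    exact ⟨⟨s - 1 - y, ⟨by omega, hyB (by omega)⟩, by omega⟩, hy⟩
  · rintro ⟨⟨a', ⟨ha't, ha'A⟩, rfl⟩, hy⟩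
    have := lt_of_notMem_firstColHooks hsort hpos ha't ha'A
    exact ⟨hy, fun _ => by rw [show s - 1 - (s - 1 - a') = a' by omega]; exact ha'A⟩

end Remnant

section PosDiffs

variable {S T : Finset ℕ} {n : ℕ}

lemma posDiffs_filter_lt_right (hS : ∀ x ∈ S, x < n) :
    posDiffs S {y ∈ T | y < n} = posDiffs S T := by
  unfold posDiffs
  congr 2
  ext ⟨x, y⟩
  simp only [mem_filter, mem_product]
  constructor
  · rintro ⟨⟨hx, hy, -⟩, hyx⟩
    exact ⟨⟨hx, hy⟩, hyx⟩
  · rintro ⟨⟨hx, hy⟩, hyx⟩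
    exact ⟨⟨hx, hy, hyx.trans (hS x hx)⟩, hyx⟩

lemma posDiffs_image_reflect (hS : ∀ x ∈ S, x < n) (hT : ∀ y ∈ T, y < n) :
    posDiffs (T.image (n - 1 - ·)) (S.image (n - 1 - ·)) = posDiffs S T := by
  let g : ℕ × ℕ → ℕ × ℕ := fun q => (n - 1 - q.2, n - 1 - q.1)
  have himage : {q ∈ T.image (n - 1 - ·) ×ˢ S.image (n - 1 - ·) | q.2 < q.1}
      = {q ∈ S ×ˢ T | q.2 < q.1}.image g := by
    ext ⟨x, y⟩
    simp only [mem_filter, mem_product, mem_image, Prod.exists, Prod.mk.injEq, g]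
    constructor
    · rintro ⟨⟨⟨b, hb, rfl⟩, a, ha, rfl⟩, hlt⟩
      have := hS a ha
      exact ⟨a, b, ⟨⟨ha, hb⟩, by omega⟩, rfl, rfl⟩
    · rintro ⟨a, b, ⟨⟨ha, hb⟩, hlt⟩, rfl, rfl⟩
      have := hS a ha
      exact ⟨⟨⟨b, hb, rfl⟩, a, ha, rfl⟩, by omega⟩
  have hinj : Set.InjOn g ({q ∈ S ×ˢ T | q.2 < q.1} : Finset (ℕ × ℕ)) := by
    rintro ⟨a, b⟩ hab ⟨a', b'⟩ hab' h
    rw [mem_coe, mem_filter, mem_product] at hab hab'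
    simp only [g, Prod.mk.injEq] at h
    have := hS a hab.1.1
    have := hS a' hab'.1.1
    have := hT b hab.1.2
    have := hT b' hab'.1.2
    ext <;> omega
  rw [posDiffs, himage, image_val_of_injOn hinj, Multiset.map_map, posDiffs]
  refine Multiset.map_congr rfl fun q hq => ?_
  simp only [mem_val, mem_filter, mem_product] at hq
  have := hS q.1 hq.1.1
  simp only [Function.comp_apply, g]
  omega

end PosDiffs

theorem posDiffs_firstColHooks_remnant {l : List ℕ} (hsort : l.Pairwise (· ≥ ·))
    (hpos : ∀ x ∈ l, 0 < x) :
    posDiffs (firstColHooks (remnant l))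
        (range ((remnant l).length + (remnant l).headD 0) \ firstColHooks (remnant l))
      = posDiffs (range (l.length + l.headD 0) \ firstColHooks l) (firstColHooks l) := by
  have hA' : ∀ x ∈ range (l.length + l.headD 0) \ firstColHooks l,
      x < l.headD 0 + (remnant l).length := fun x hx => by
    rw [mem_sdiff, mem_range] at hx
    exact lt_of_notMem_firstColHooks hsort hpos hx.1 hx.2
  have hB : ∀ x ∈ firstColHooks (remnant l), x < (remnant l).length + (remnant l).headD 0 :=
    fun x hx => by
      obtain ⟨i, hi, rfl⟩ := mem_firstColHooks.1 hx
      exact hook_zero_lt (remnant_pairwise hsort) remnant_pos hi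
  rw [range_sdiff_firstColHooks_remnant hsort hpos, posDiffs_filter_lt_right hB,
    firstColHooks_remnant_eq_image hsort hpos,
    posDiffs_image_reflect hA' (fun a ha => (mem_filter.1 ha).2), posDiffs_filter_lt_right hA']

theorem stmt4_general (l : List ℕ) (hl : IsPartition l) :
    hookMultiset (remnant l)
      = posDiffs (Finset.range (l.length + l.headD 0) \ firstColHooks l)
          (firstColHooks l) := by
  rw [hookMultiset_eq_posDiffs (remnant_pairwise hl.1) remnant_pos,
    posDiffs_firstColHooks_remnant hl.1 hl.2]

/-- `H(λ̃) = {a' - a : a' ∈ A', a ∈ A, a' > a}`. -/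
theorem stmt4 (l : List ℕ) (hl : IsPartition l) (hne : l ≠ []) :
    hookMultiset (remnant l)
      = posDiffs (Finset.range (l.length + l.headD 0) \ firstColHooks l)
          (firstColHooks l) :=
  stmt4_general l hl
end

section
/- Let λ be a partition with r rows, A the set of its first-column hook lengths, A′ the complement of A in {0,…,t−1} where t is the row-plus-column sum, and fix a row i with left-most hook length a = h(i,1). Then the multiset of hook lengths occurring in row i of λ equals {a − a′ : a′ ∈ A′, a′ < a}. -/
/-!
Label the unit steps of the boundary path of `λ`, from the bottom-left corner to the top-right,
by `0, …, t - 1`. The vertical step of row `k` is preceded by the `λ_k` horizontal steps to its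
left and the `r - 1 - k` vertical steps below it, so its label is `h(k,1)`: the vertical labels form
`A` and the horizontal ones `A'`. The hook of the box `(i, j)` runs from the vertical step of row
`i` to the horizontal step of column `j`, so its length is the difference of their labels, and the
columns `j < λ_i` are exactly those whose horizontal label is below `h(i,1)`.
-/

open Finset

theorem card_range_filter_gt (k r : ℕ) : ((range r).filter (k < ·)).card = r - 1 - k := by
  have : (range r).filter (k < ·) = Ioo k r := by
    ext x
    simp only [mem_filter, mem_range, mem_Ioo]
    omega
  rw [this, Nat.card_Ioo]
  omega

theorem posDiffs_singleton (s : ℕ) (T : Finset ℕ) :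
    posDiffs {s} T = (T.filter (· < s)).val.map (s - ·) := by
  rw [posDiffs, singleton_product, filter_map, map_val, Multiset.map_map]
  rfl

namespace IsPartition

variable {l : List ℕ}

theorem antitone_getD (hl : IsPartition l) : Antitone fun k => l.getD k 0 := by
  intro k k' hkk'
  show l.getD k' 0 ≤ l.getD k 0
  by_cases hk' : k' < l.length
  · rcases hkk'.eq_or_lt with rfl | hlt
    · rfl
    · simp only [List.getD_eq_getElem _ _ hk', List.getD_eq_getElem _ _ (hlt.trans hk')]
      exact hl.1.rel_get_of_lt hlt
  · rw [List.getD_eq_default _ _ (not_lt.1 hk')]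
    exact Nat.zero_le _

theorem getD_pos (hl : IsPartition l) {k : ℕ} (hk : k < l.length) : 0 < l.getD k 0 := by
  rw [List.getD_eq_getElem _ _ hk]
  exact hl.2 _ (List.getElem_mem hk)

theorem hook_zero (hl : IsPartition l) (k : ℕ) :
    hook l k 0 = l.getD k 0 + (l.length - 1 - k) := by
  have hlegs : (range l.length).filter (fun k' => k < k' ∧ 0 < l.getD k' 0)
      = (range l.length).filter (k < ·) :=
    filter_congr fun k' hk' => and_iff_left (hl.getD_pos (mem_range.1 hk'))
  simp only [hook, Nat.sub_zero, hlegs, card_range_filter_gt]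

theorem hook_zero_lt (hl : IsPartition l) {k k' : ℕ} (hkk' : k < k') (hk' : k' < l.length) :
    hook l k' 0 < hook l k 0 := by
  have := hl.antitone_getD hkk'.le
  simp only [hl.hook_zero] at this ⊢
  omega

end IsPartition

/-- The label of the horizontal step of column `j` on the boundary path: it is preceded by `j`
horizontal steps and by the vertical steps of the rows of length at most `j`. -/
def colLabel (l : List ℕ) (j : ℕ) : ℕ :=
  j + ((range l.length).filter fun k => l.getD k 0 ≤ j).card

theorem colLabel_strictMono (l : List ℕ) : StrictMono (colLabel l) := by
  intro j j' hjj'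
  have : ((range l.length).filter fun k => l.getD k 0 ≤ j).card
      ≤ ((range l.length).filter fun k => l.getD k 0 ≤ j').card :=
    card_le_card fun x hx => by
      simp only [mem_filter] at hx ⊢
      exact ⟨hx.1, hx.2.trans hjj'.le⟩
  simp only [colLabel]
  omega

namespace IsPartition

variable {l : List ℕ}

theorem hook_add_colLabel (hl : IsPartition l) {i j : ℕ} (hj : j < l.getD i 0) :
    hook l i j + colLabel l j = hook l i 0 := by
  -- the rows of length at most `j` all lie below row `i`
  have hshort : (range l.length).filter (fun k => l.getD k 0 ≤ j)
      = ((range l.length).filter (i < ·)).filter (fun k => ¬ j < l.getD k 0) := by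
    rw [filter_filter]
    refine filter_congr fun k _ => ⟨fun hk => ⟨?_, by omega⟩, fun hk => by omega⟩
    by_contra hki
    have : l.getD i 0 ≤ l.getD k 0 := hl.antitone_getD (not_lt.1 hki)
    omega
  have hlong : (range l.length).filter (fun k => i < k ∧ j < l.getD k 0)
      = ((range l.length).filter (i < ·)).filter (fun k => j < l.getD k 0) := by
    rw [filter_filter]
  have hsplit := card_filter_add_card_filter_not (s := (range l.length).filter (i < ·))
    (p := fun k => j < l.getD k 0)
  rw [← hlong, ← hshort, card_range_filter_gt] at hsplit
  rw [hl.hook_zero]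
  simp only [hook, colLabel]
  omega

theorem colLabel_notMem_firstColHooks (hl : IsPartition l) (j : ℕ) :
    colLabel l j ∉ firstColHooks l := by
  simp only [firstColHooks, mem_image, mem_range, not_exists, not_and]
  intro k hk hlabel
  rw [hl.hook_zero] at hlabel
  simp only [colLabel] at hlabel
  -- if row `k` is short, so are all rows below it; if not, only rows below it can be short
  by_cases hkj : l.getD k 0 ≤ j
  · have : Ico k l.length ⊆ (range l.length).filter fun k' => l.getD k' 0 ≤ j := fun x hx => by
      rw [mem_Ico] at hx
      exact mem_filter.2 ⟨mem_range.2 hx.2, (hl.antitone_getD hx.1).trans hkj⟩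
    have := card_le_card this
    rw [Nat.card_Ico] at this
    omega
  · have : ((range l.length).filter fun k' => l.getD k' 0 ≤ j) ⊆ Ioo k l.length := fun x hx => by
      rw [mem_filter, mem_range] at hx
      refine mem_Ioo.2 ⟨lt_of_not_ge fun hxk => hkj ?_, hx.1⟩
      exact (hl.antitone_getD hxk).trans hx.2
    have := card_le_card this
    rw [Nat.card_Ioo] at this
    omega

theorem card_range_sdiff_firstColHooks_le (hl : IsPartition l) (i : ℕ) :
    (range (hook l i 0) \ firstColHooks l).card ≤ l.getD i 0 := by
  set below := (Ioo i l.length).image fun k => hook l k 0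
  have hbelow_sub : below ⊆ range (hook l i 0) := by
    simp only [below, image_subset_iff, mem_Ioo, mem_range]
    exact fun k hk => hl.hook_zero_lt hk.1 hk.2
  have hbelow_card : below.card = l.length - 1 - i := by
    rw [card_image_of_injOn, Nat.card_Ioo]
    · omega
    · intro k hk k' hk' hkk'
      simp only [coe_Ioo, Set.mem_Ioo] at hk hk'
      by_contra hne
      rcases Nat.lt_or_gt_of_ne hne with h | h
      · exact (hl.hook_zero_lt h hk'.2).ne' hkk'
      · exact (hl.hook_zero_lt h hk.2).ne hkk'
  have hbelow_firstCol : below ⊆ firstColHooks l :=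
    image_subset_image (fun k hk => mem_range.2 (mem_Ioo.1 hk).2)
  calc (range (hook l i 0) \ firstColHooks l).card
      ≤ (range (hook l i 0) \ below).card := card_le_card (sdiff_subset_sdiff le_rfl hbelow_firstCol)
    _ = l.getD i 0 := by
      rw [card_sdiff_of_subset hbelow_sub, hbelow_card, card_range, hl.hook_zero]
      omega

theorem image_colLabel_range (hl : IsPartition l) (i : ℕ) :
    (range (l.getD i 0)).image (colLabel l) = range (hook l i 0) \ firstColHooks l := by
  refine eq_of_subset_of_card_le (fun x hx => ?_) ?_
  · obtain ⟨j, hj, rfl⟩ := mem_image.1 hx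
    rw [mem_range] at hj
    have := hl.hook_add_colLabel hj
    have : 0 < hook l i j := by simp only [hook]; omega
    exact mem_sdiff.2 ⟨mem_range.2 (by omega), hl.colLabel_notMem_firstColHooks j⟩
  · rw [card_image_of_injective _ (colLabel_strictMono l).injective, card_range]
    exact hl.card_range_sdiff_firstColHooks_le i

end IsPartition

theorem stmt5_general (l : List ℕ) (hl : IsPartition l) (i : ℕ) :
    (↑((List.range (l.getD i 0)).map fun j => hook l i j) : Multiset ℕ)
      = posDiffs {hook l i 0}
          (Finset.range (l.length + l.headD 0) \ firstColHooks l) := by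
  have hhead : l.getD 0 0 = l.headD 0 := by cases l <;> rfl
  have hle : hook l i 0 ≤ l.length + l.headD 0 := by
    have : l.getD i 0 ≤ l.getD 0 0 := hl.antitone_getD (Nat.zero_le i)
    rw [hl.hook_zero]
    omega
  have hbelow : (range (l.length + l.headD 0) \ firstColHooks l).filter (· < hook l i 0)
      = range (hook l i 0) \ firstColHooks l := by
    ext x
    simp only [mem_filter, mem_sdiff, mem_range]
    exact ⟨fun ⟨⟨_, hA⟩, hx⟩ => ⟨hx, hA⟩, fun ⟨hx, hA⟩ => ⟨⟨hx.trans_le hle, hA⟩, hx⟩⟩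
  rw [posDiffs_singleton, hbelow, ← hl.image_colLabel_range i,
    image_val_of_injOn (colLabel_strictMono l).injective.injOn, Multiset.map_map, range_val,
    ← Multiset.coe_range, Multiset.map_coe]
  congr 1
  refine List.map_congr_left fun j hj => ?_
  have := hl.hook_add_colLabel (List.mem_range.1 hj)
  simp only [Function.comp_apply]
  omega

/-- The hooks in row `i` are `{a - a' : a' ∈ A', a' < a}` where `a = h(i,1)`. -/
theorem stmt5 (l : List ℕ) (hl : IsPartition l) (hne : l ≠ []) (i : ℕ) (hi : i < l.length) :
    (↑((List.range (l.getD i 0)).map fun j => hook l i j) : Multiset ℕ)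
      = posDiffs {hook l i 0}
          (Finset.range (l.length + l.headD 0) \ firstColHooks l) :=
  stmt5_general l hl i
end
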